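/- Fix α ∈ (0,1) and set ξ₀ := −(1−α) log β / (λα). If ε ∈ (0, ξ₀), π ∈ 𝒫 is ε-optimal at x, and γ := J*(λ,x), then E_x^π[ exp( λα Σ_{t=0}^{T−1} (C(X_t,A_t) − γ) ) ] < ∞, where T is the first positive arrival time to z. -/

import Mathlib

open scoped Classical BigOperators ENNReal

namespace RiskSensitive

/-- A (history-dependent, randomized) policy for a finite MDP: given the past
(chronological list of (state, action) pairs) and the current state, it assigns a
probability weight to each action, concentrated on the admissible actions. -/
structure Policy (S A : Type*) [Fintype S] [Fintype A] (Adm : S → Finset A) where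
  toFun : List (S × A) → S → A → ℝ
  nonneg : ∀ h s a, 0 ≤ toFun h s a
  sum_one : ∀ h s, ∑ a, toFun h s a = 1
  supp : ∀ h s a, a ∉ Adm s → toFun h s a = 0

variable {S A : Type*} [Fintype S] [Fintype A]
variable (Adm : S → Finset A) (p : S → A → S → ℝ) (C : S → A → ℝ) (lam : ℝ)

/-- Probability of a finite trajectory (list of (action, next-state) pairs), given the
history so far and the current state. -/
noncomputable def pathProbAux (π : Policy S A Adm) :
    List (S × A) → S → List (A × S) → ℝ
  | _, _, [] => 1
  | hist, x, (a, y) :: rest =>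
      π.toFun hist x a * p x a y * pathProbAux π (hist ++ [(x, a)]) y rest

/-- `pathProb π x l` is `P_x^π[A_0 = a_0, X_1 = y_1, …]` for `l = [(a_0,y_1),…]`. -/
noncomputable def pathProb (π : Policy S A Adm) (x : S) (l : List (A × S)) : ℝ :=
  pathProbAux Adm p π [] x l

/-- Probability of a cylinder event depending on the first `n` (action, next-state) pairs. -/
noncomputable def cylProb (π : Policy S A Adm) (x : S) (n : ℕ)
    (E : (Fin n → A × S) → Prop) : ℝ :=
  ∑ v : Fin n → A × S, if E v then pathProb Adm p π x (List.ofFn v) else 0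

/-- The state `X_t` along the trajectory encoded by `l`, starting from `x`. -/
def stateAt (x : S) (l : List (A × S)) (t : ℕ) : S :=
  (l.take t).foldl (fun _ q => q.2) x

/-- The final state of the finite trajectory `l` started at `x`. -/
def lastState (x : S) (l : List (A × S)) : S :=
  l.foldl (fun _ q => q.2) x

/-- `Σ_t w(X_t, A_t)` along the finite trajectory `l` started at `x`. -/
def costSum (w : S → A → ℝ) : S → List (A × S) → ℝ
  | _, [] => 0
  | x, (a, y) :: rest => w x a + costSum w y rest

/-- `J_n(λ,π,x) = (1/λ) log E_x^π[exp(λ Σ_{t<n} C(X_t,A_t))]`. -/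
noncomputable def Jn (π : Policy S A Adm) (x : S) (n : ℕ) : ℝ :=
  (1 / lam) * Real.log (∑ v : Fin n → A × S,
    pathProb Adm p π x (List.ofFn v) * Real.exp (lam * costSum C x (List.ofFn v)))

/-- The risk-sensitive average cost `J(λ,π,x) = limsup_n J_n(λ,π,x)/n`. -/
noncomputable def Javg (π : Policy S A Adm) (x : S) : ℝ :=
  Filter.limsup (fun n : ℕ => Jn Adm p C lam π x n / n) Filter.atTop

/-- Optimal risk-sensitive average cost `J*(λ,x)`. -/
noncomputable def Jopt (x : S) : ℝ :=
  ⨅ π : Policy S A Adm, Javg Adm p C lam π x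

/-- `π` is `ε`-optimal at `x`. -/
def EpsOptimalAt (π : Policy S A Adm) (x : S) (ε : ℝ) : Prop :=
  Javg Adm p C lam π x ≤ Jopt Adm p C lam x + ε

/-- `FirstExit Q v` : the trajectory `v` leaves `{Q}` for the first time exactly at its
last step, i.e. the exit time of `Q` equals `n`. -/
def FirstExit (Q : S → Prop) {n : ℕ} (v : Fin n → A × S) : Prop :=
  0 < n ∧ (∀ t : Fin n, (t : ℕ) + 1 < n → Q (v t).2) ∧
    ∀ t : Fin n, (t : ℕ) + 1 = n → ¬ Q (v t).2

/-- `E_x^π[ exp(Σ_{t<τ} w(X_t,A_t)) ]` where `τ = min{n ≥ 1 : ¬ Q (X_n)}` is the first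
exit time from `Q` (the contribution of `[τ = ∞]` is null when `τ < ∞` a.s.). -/
noncomputable def EexitExp (π : Policy S A Adm) (x : S) (Q : S → Prop)
    (w : S → A → ℝ) : ℝ≥0∞ :=
  ∑' n : ℕ, ∑ v : Fin n → A × S,
    if FirstExit Q v then
      ENNReal.ofReal (pathProb Adm p π x (List.ofFn v) *
        Real.exp (costSum w x (List.ofFn v)))
    else 0

/-- `E_x^π[ exp(Σ_{t<T} w(X_t,A_t)) ]` with `T` the first positive arrival time to `z`. -/
noncomputable def EhitExp (π : Policy S A Adm) (x z : S) (w : S → A → ℝ) : ℝ≥0∞ :=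
  EexitExp Adm p π x (fun y => y ≠ z) w

/-- `E_x^π[T]`, the expected first positive arrival time to `z`, computed as
`Σ_{n≥0} P_x^π[T > n]`. -/
noncomputable def ExpT (π : Policy S A Adm) (x z : S) : ℝ≥0∞ :=
  ∑' n : ℕ, ENNReal.ofReal
    (cylProb Adm p π x n (fun v => ∀ t : Fin n, (v t).2 ≠ z))

/-- `P_x^π[T > n]`, the probability that `z` is not visited during the first `n` steps. -/
noncomputable def survProb (π : Policy S A Adm) (x z : S) (n : ℕ) : ℝ :=
  cylProb Adm p π x n (fun v => ∀ t : Fin n, (v t).2 ≠ z)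

/-- The stationary policy induced by a choice function `f ∈ 𝔽`. -/
noncomputable def stationary (f : S → A) (hf : ∀ s, f s ∈ Adm s) : Policy S A Adm where
  toFun := fun _ s a => if a = f s then 1 else 0
  nonneg := by intro h s a; (try dsimp only); split <;> norm_num
  sum_one := by intro h s; simp
  supp := by
    intro h s a ha
    try dsimp only
    rw [if_neg]
    intro hEq
    exact ha (hEq ▸ hf s)

/-- The simultaneous Doeblin condition: `E_x^f[T] ≤ M` for every state `x` and every
stationary policy `f`, where `T` is the first positive arrival time to `z`. -/
def Doeblin (z : S) (M : ℝ) : Prop :=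
  0 < M ∧ ∀ (x : S) (f : S → A) (hf : ∀ s, f s ∈ Adm s),
    ExpT Adm p (stationary Adm f hf) x z ≤ ENNReal.ofReal M

/-- `B_g(x) = {a ∈ A(x) : g(x) = max{g(y) : p_{xy}(a) > 0}}`. -/
def Bg (g : S → ℝ) (x : S) : Set A :=
  {a | a ∈ Adm x ∧ g x = sSup (g '' {y | 0 < p x a y})}

/-- The family `𝒢` of functions characterizing `J*(λ,·)`. -/
def Gclass : Set (S → ℝ) :=
  {g | (∀ x, g x = sInf ((fun a => sSup (g '' {y | 0 < p x a y})) '' (Adm x : Set A))) ∧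
    ∃ h : S → ℝ, ∀ x,
      sInf ((fun a => Real.exp (lam * C x a) * ∑ y, p x a y * Real.exp (lam * h y)) ''
        Bg Adm p g x) ≤ Real.exp (lam * g x + lam * h x)}

/-- The class `𝒫*` of policies which always select actions in `B*(X_t)`. -/
def Pstar : Set (Policy S A Adm) :=
  {π | ∀ (x : S) (t : ℕ),
    cylProb Adm p π x (t + 1)
      (fun v => (v (Fin.last t)).1 ∈
        Bg Adm p (Jopt Adm p C lam) (stateAt x (List.ofFn v) t)) = 1}

/-- The deviation function
`h(x) = inf_{π ∈ 𝒫*} (1/λ) log E_x^π[exp(λα Σ_{t<T}(C(X_t,A_t) − J*(λ,X_t)))]`. -/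
noncomputable def hdev (z : S) (α : ℝ) (x : S) : EReal :=
  ⨅ π ∈ Pstar Adm p C lam, ((lam⁻¹ : ℝ) : EReal) *
    ENNReal.log (EhitExp Adm p π x z
      (fun s a => lam * α * (C s a - Jopt Adm p C lam s)))

/-- `ψ(ε) = (1/λ) inf_{δ∈𝒫*} log E_z^δ[exp(λ Σ_{t<T}(C(X_t,A_t) − γ₀ − 2ε))]`. -/
noncomputable def psi (z : S) (ε : ℝ) : EReal :=
  ((lam⁻¹ : ℝ) : EReal) * ⨅ π ∈ Pstar Adm p C lam,
    ENNReal.log (EhitExp Adm p π z z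
      (fun s a => lam * (C s a - Jopt Adm p C lam z - 2 * ε)))

/-- `ξ₀ = −(1−α) log β / (λα)`. -/
noncomputable def xi0 (α β : ℝ) : ℝ := -((1 - α) * Real.log β) / (lam * α)

/-- `ξ₁`: 1 if `J*(λ,·)` is constant, otherwise the minimum gap between distinct
values of `J*(λ,·)`. -/
noncomputable def xi1 : ℝ :=
  if ∀ u v : S, Jopt Adm p C lam u = Jopt Adm p C lam v then 1
  else sInf {d | ∃ u v : S, Jopt Adm p C lam u < Jopt Adm p C lam v ∧
    d = Jopt Adm p C lam v - Jopt Adm p C lam u}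

/-- `ξ = min{ξ₀, ξ₁}`. -/
noncomputable def xi (α β : ℝ) : ℝ := min (xi0 lam α β) (xi1 Adm p C lam)

/-- The shifted policy obtained by prefixing the fixed history `pre`. -/
def shiftPolicy (π : Policy S A Adm) (pre : List (S × A)) : Policy S A Adm where
  toFun := fun h s a => π.toFun (pre ++ h) s a
  nonneg := fun h s a => π.nonneg _ s a
  sum_one := fun h s => π.sum_one _ s
  supp := fun h s a ha => π.supp _ s a ha

/-- The history (list of (state, action) pairs) along the trajectory `l` started at `x`. -/
def histOf : S → List (A × S) → List (S × A)
  | _, [] => []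
  | x, (a, y) :: rest => (x, a) :: histOf y rest


/-!
Hölder's inequality with exponents `1/α` and `1/(1-α)` splits the `n`-th term of the series,
`E[exp(λα Σ_{t<n}(C - γ)); T = n]`, into `e^{-λαγn} E[exp(λ Σ_{t<n} C)]^α P[T = n]^{1-α}`.
By `ε`-optimality the first factor is eventually at most `e^{λα(γ+η)n}` for any `η > ε`, and
`P[T = n] ≤ P[T > n-1] ≤ β₀ βⁿ`. The `n`-th term is therefore eventually at most
`β₀^{1-α} (e^{λαη} β^{1-α})ⁿ`, and the ratio is `< 1` exactly when `η < ξ₀`.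
-/

theorem _root_.List.ofFn_snoc {α : Type*} {n : ℕ} (u : Fin n → α) (q : α) :
    List.ofFn (Fin.snoc u q : Fin (n + 1) → α) = List.ofFn u ++ [q] := by
  rw [List.ofFn_succ_last]
  simp

theorem sum_fin_succ_fun_eq_sum_snoc {ι M : Type*} [Fintype ι] [AddCommMonoid M] (n : ℕ)
    (F : (Fin (n + 1) → ι) → M) :
    ∑ v, F v = ∑ u : Fin n → ι, ∑ q : ι, F (Fin.snoc u q) := by
  rw [← Equiv.sum_comp (Fin.snocEquiv fun _ => ι) F, Fintype.sum_prod_type, Finset.sum_comm]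
  rfl

def IsStochastic : Prop :=
  ∀ x, ∀ a ∈ Adm x, (∀ y, 0 ≤ p x a y) ∧ ∑ y, p x a y = 1

noncomputable def pathExpect (π : Policy S A Adm) (x : S) (n : ℕ)
    (F : (Fin n → A × S) → ℝ) : ℝ :=
  ∑ v : Fin n → A × S, pathProb Adm p π x (List.ofFn v) * F v

section

variable {Adm p C lam}

theorem pathProbAux_nonneg (hp : ∀ x, ∀ a ∈ Adm x, ∀ y, 0 ≤ p x a y) (π : Policy S A Adm)
    (hist : List (S × A)) (x : S) (l : List (A × S)) :
    0 ≤ pathProbAux Adm p π hist x l := by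
  induction l generalizing hist x with
  | nil => simp [pathProbAux]
  | cons q rest ih =>
    obtain ⟨a, y⟩ := q
    by_cases ha : a ∈ Adm x
    · exact mul_nonneg (mul_nonneg (π.nonneg _ _ _) (hp x a ha y)) (ih _ _)
    · simp [pathProbAux, π.supp _ _ _ ha]

theorem pathProb_nonneg (hp : ∀ x, ∀ a ∈ Adm x, ∀ y, 0 ≤ p x a y) (π : Policy S A Adm)
    (x : S) (l : List (A × S)) : 0 ≤ pathProb Adm p π x l :=
  pathProbAux_nonneg hp π [] x l

theorem pathProbAux_append (π : Policy S A Adm) (hist : List (S × A)) (x : S)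
    (l l' : List (A × S)) :
    pathProbAux Adm p π hist x (l ++ l') =
      pathProbAux Adm p π hist x l *
        pathProbAux Adm p π (hist ++ histOf x l) (lastState x l) l' := by
  induction l generalizing hist x with
  | nil => simp [pathProbAux, histOf, lastState]
  | cons q rest ih =>
    obtain ⟨a, y⟩ := q
    simp only [List.cons_append, pathProbAux, histOf, ih, List.append_assoc, List.nil_append]
    rw [show lastState x ((a, y) :: rest) = lastState y rest from rfl]
    ring

theorem sum_pathProbAux_singleton (hp : ∀ x, ∀ a ∈ Adm x, ∑ y, p x a y = 1)
    (π : Policy S A Adm) (hist : List (S × A)) (x : S) :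
    ∑ q : A × S, pathProbAux Adm p π hist x [q] = 1 := by
  have hmarginal (a : A) : ∑ y, pathProbAux Adm p π hist x [(a, y)] = π.toFun hist x a := by
    by_cases ha : a ∈ Adm x
    · simp only [pathProbAux, mul_one, ← Finset.mul_sum, hp x a ha]
    · simp [pathProbAux, π.supp _ _ _ ha]
  simp only [Fintype.sum_prod_type, hmarginal, π.sum_one]

theorem sum_pathProb_snoc (hp : ∀ x, ∀ a ∈ Adm x, ∑ y, p x a y = 1) (π : Policy S A Adm)
    (x : S) {n : ℕ} (u : Fin n → A × S) :
    ∑ q : A × S, pathProb Adm p π x (List.ofFn (Fin.snoc u q)) =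
      pathProb Adm p π x (List.ofFn u) := by
  simp only [pathProb, List.ofFn_snoc, pathProbAux_append, ← Finset.mul_sum,
    sum_pathProbAux_singleton hp, mul_one]

theorem sum_pathProb_eq_one (hp : ∀ x, ∀ a ∈ Adm x, ∑ y, p x a y = 1) (π : Policy S A Adm)
    (x : S) (n : ℕ) : ∑ v : Fin n → A × S, pathProb Adm p π x (List.ofFn v) = 1 := by
  induction n with
  | zero => simp [pathProb, pathProbAux]
  | succ n ih => simp only [sum_fin_succ_fun_eq_sum_snoc, sum_pathProb_snoc hp, ih]

theorem cylProb_succ_le (hp : IsStochastic Adm p) (π : Policy S A Adm) (x : S) {m : ℕ}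
    {Φ : (Fin (m + 1) → A × S) → Prop} {E : (Fin m → A × S) → Prop}
    (hΦE : ∀ u q, Φ (Fin.snoc u q) → E u) :
    cylProb Adm p π x (m + 1) Φ ≤ cylProb Adm p π x m E := by
  rw [cylProb, sum_fin_succ_fun_eq_sum_snoc]
  refine Finset.sum_le_sum fun u _ => ?_
  split_ifs with hu
  · rw [← sum_pathProb_snoc (fun x a ha => (hp x a ha).2) π x u]
    exact Finset.sum_le_sum fun q _ => by
      split_ifs
      exacts [le_rfl, pathProb_nonneg (fun x a ha => (hp x a ha).1) _ _ _]
  · exact (Finset.sum_eq_zero fun q _ => if_neg fun hΦ => hu (hΦE u q hΦ)).le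

theorem cylProb_firstExit_le (hp : IsStochastic Adm p) (π : Policy S A Adm) (x : S)
    (Q : S → Prop) (m : ℕ) :
    cylProb Adm p π x (m + 1) (FirstExit Q) ≤
      cylProb Adm p π x m (fun u => ∀ t, Q (u t).2) :=
  cylProb_succ_le hp π x fun _ _ hexit t => by simpa using hexit.2.1 t.castSucc (by simp)

theorem pathExpect_mono (hp : ∀ x, ∀ a ∈ Adm x, ∀ y, 0 ≤ p x a y) (π : Policy S A Adm)
    (x : S) {n : ℕ} {F G : (Fin n → A × S) → ℝ} (hFG : ∀ v, F v ≤ G v) :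
    pathExpect Adm p π x n F ≤ pathExpect Adm p π x n G :=
  Finset.sum_le_sum fun v _ => mul_le_mul_of_nonneg_left (hFG v) (pathProb_nonneg hp _ _ _)

theorem pathExpect_const (hp : ∀ x, ∀ a ∈ Adm x, ∑ y, p x a y = 1) (π : Policy S A Adm)
    (x : S) (n : ℕ) (c : ℝ) : pathExpect Adm p π x n (fun _ => c) = c := by
  rw [pathExpect, ← Finset.sum_mul, sum_pathProb_eq_one hp, one_mul]

theorem pathExpect_mul_left (π : Policy S A Adm) (x : S) {n : ℕ} (c : ℝ)
    (F : (Fin n → A × S) → ℝ) :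
    pathExpect Adm p π x n (fun v => c * F v) = c * pathExpect Adm p π x n F := by
  simp only [pathExpect, Finset.mul_sum, mul_left_comm]

theorem pathExpect_nonneg (hp : ∀ x, ∀ a ∈ Adm x, ∀ y, 0 ≤ p x a y) (π : Policy S A Adm)
    (x : S) {n : ℕ} {F : (Fin n → A × S) → ℝ} (hF : ∀ v, 0 ≤ F v) :
    0 ≤ pathExpect Adm p π x n F :=
  Finset.sum_nonneg fun v _ => mul_nonneg (pathProb_nonneg hp _ _ _) (hF v)

theorem pathExpect_pos (hp : IsStochastic Adm p) (π : Policy S A Adm) (x : S) {n : ℕ}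
    {F : (Fin n → A × S) → ℝ} (hF : ∀ v, 0 < F v) : 0 < pathExpect Adm p π x n F := by
  have hP := pathProb_nonneg (fun x a ha => (hp x a ha).1) π x
  obtain ⟨v, -, hv⟩ := Finset.exists_ne_zero_of_sum_ne_zero
    ((sum_pathProb_eq_one (fun x a ha => (hp x a ha).2) π x n).trans_ne one_ne_zero)
  exact Finset.sum_pos' (fun v _ => mul_nonneg (hP _) (hF v).le)
    ⟨v, Finset.mem_univ v, mul_pos ((hP _).lt_of_ne' hv) (hF v)⟩

theorem pathExpect_ite_rpow_le (hp : ∀ x, ∀ a ∈ Adm x, ∀ y, 0 ≤ p x a y)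
    (π : Policy S A Adm) (x : S) {n : ℕ} {α : ℝ} (hα0 : 0 < α) (hα1 : α ≤ 1)
    (Φ : (Fin n → A × S) → Prop) {g : (Fin n → A × S) → ℝ} (hg : ∀ v, 0 ≤ g v) :
    pathExpect Adm p π x n (fun v => if Φ v then g v ^ α else 0) ≤
      cylProb Adm p π x n Φ ^ (1 - α) * pathExpect Adm p π x n g ^ α := by
  set w : (Fin n → A × S) → ℝ := fun v => if Φ v then pathProb Adm p π x (List.ofFn v) else 0
  have hw (v) : 0 ≤ w v := by
    simp only [w]; split_ifs
    exacts [pathProb_nonneg hp _ _ _, le_rfl]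
  have holder := Real.inner_le_weight_mul_Lp_of_nonneg Finset.univ
    ((one_le_inv₀ hα0).2 hα1) w (fun v => g v ^ α) hw (fun v => Real.rpow_nonneg (hg v) α)
  simp only [inv_inv, Real.rpow_rpow_inv (hg _) hα0.ne'] at holder
  calc pathExpect Adm p π x n (fun v => if Φ v then g v ^ α else 0)
      = ∑ v, w v * g v ^ α := by
        refine Finset.sum_congr rfl fun v _ => ?_
        simp only [w]; split_ifs <;> simp
    _ ≤ cylProb Adm p π x n Φ ^ (1 - α) * (∑ v, w v * g v) ^ α := holder
    _ ≤ cylProb Adm p π x n Φ ^ (1 - α) * pathExpect Adm p π x n g ^ α := by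
        have hdrop : ∑ v, w v * g v ≤ pathExpect Adm p π x n g := by
          refine Finset.sum_le_sum fun v _ => mul_le_mul_of_nonneg_right ?_ (hg v)
          simp only [w]; split_ifs
          exacts [le_rfl, pathProb_nonneg hp _ _ _]
        exact mul_le_mul_of_nonneg_left
          (Real.rpow_le_rpow (Finset.sum_nonneg fun v _ => mul_nonneg (hw v) (hg v)) hdrop hα0.le)
          (Real.rpow_nonneg (Finset.sum_nonneg fun v _ => hw v) _)

theorem EexitExp_lt_top_of_summable (hp : ∀ x, ∀ a ∈ Adm x, ∀ y, 0 ≤ p x a y)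
    (π : Policy S A Adm) (x : S) (Q : S → Prop) (w : S → A → ℝ)
    (hsum : Summable fun n => pathExpect Adm p π x n
      (fun v => if FirstExit Q v then Real.exp (costSum w x (List.ofFn v)) else 0)) :
    EexitExp Adm p π x Q w < ⊤ := by
  have hterm_nonneg (n : ℕ) (v : Fin n → A × S) :
      0 ≤ pathProb Adm p π x (List.ofFn v) *
        (if FirstExit Q v then Real.exp (costSum w x (List.ofFn v)) else 0) :=
    mul_nonneg (pathProb_nonneg hp _ _ _) (by split_ifs <;> positivity)
  have hseries : EexitExp Adm p π x Q w = ∑' n, ENNReal.ofReal (pathExpect Adm p π x n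
      (fun v => if FirstExit Q v then Real.exp (costSum w x (List.ofFn v)) else 0)) := by
    refine tsum_congr fun n => ?_
    rw [pathExpect, ENNReal.ofReal_sum_of_nonneg fun v _ => hterm_nonneg n v]
    refine Finset.sum_congr rfl fun v _ => ?_
    split_ifs <;> simp
  rw [hseries, ← ENNReal.ofReal_tsum_of_nonneg
    (fun n => pathExpect_nonneg hp π x fun v => by split_ifs <;> positivity) hsum]
  exact ENNReal.ofReal_lt_top

theorem costSum_mul_sub_const {σ ι : Type*} (w : σ → ι → ℝ) (c γ : ℝ) (x : σ)
    (l : List (ι × σ)) :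
    costSum (fun s a => c * (w s a - γ)) x l = c * (costSum w x l - γ * l.length) := by
  induction l generalizing x with
  | nil => simp [costSum]
  | cons q rest ih =>
    obtain ⟨a, y⟩ := q
    simp only [costSum, ih, List.length_cons, Nat.cast_succ]
    ring

theorem costSum_le {σ ι : Type*} {w : σ → ι → ℝ} {c : ℝ} (hw : ∀ s a, w s a ≤ c) (x : σ)
    (l : List (ι × σ)) : costSum w x l ≤ c * l.length := by
  induction l generalizing x with
  | nil => simp [costSum]
  | cons q rest ih =>
    obtain ⟨a, y⟩ := q
    simp only [costSum, List.length_cons, Nat.cast_succ]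
    linarith [hw x a, ih y]

theorem exp_mul_Jn (hp : IsStochastic Adm p) (hlam : lam ≠ 0) (π : Policy S A Adm) (x : S)
    (n : ℕ) :
    Real.exp (lam * Jn Adm p C lam π x n) =
      pathExpect Adm p π x n (fun v => Real.exp (lam * costSum C x (List.ofFn v))) := by
  rw [Jn, ← mul_assoc, mul_one_div_cancel hlam, one_mul]
  exact Real.exp_log (pathExpect_pos hp π x fun v => Real.exp_pos _)

theorem Jn_le (hp : IsStochastic Adm p) (hlam : 0 < lam) {c : ℝ} (hC : ∀ s a, C s a ≤ c)
    (π : Policy S A Adm) (x : S) (n : ℕ) : Jn Adm p C lam π x n ≤ c * n := by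
  have hexp : Real.exp (lam * Jn Adm p C lam π x n) ≤ Real.exp (lam * (c * n)) := by
    rw [exp_mul_Jn hp hlam.ne', ← pathExpect_const (fun x a ha => (hp x a ha).2) π x n
      (Real.exp (lam * (c * n)))]
    refine pathExpect_mono (fun x a ha => (hp x a ha).1) π x fun v => ?_
    have := costSum_le hC x (List.ofFn v)
    rw [List.length_ofFn] at this
    gcongr
  exact le_of_mul_le_mul_left (Real.exp_le_exp.1 hexp) hlam

theorem eventually_pathExpect_exp_costSum_le (hp : IsStochastic Adm p) (hlam : 0 < lam)
    {π : Policy S A Adm} {x : S} {c : ℝ} (hJ : Javg Adm p C lam π x < c) :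
    ∀ᶠ n : ℕ in Filter.atTop, pathExpect Adm p π x n
      (fun v => Real.exp (lam * costSum C x (List.ofFn v))) ≤ Real.exp (lam * (c * n)) := by
  obtain ⟨b, hb⟩ := Finite.exists_le fun q : S × A => C q.1 q.2
  have hbdd : Filter.IsBoundedUnder (· ≤ ·) Filter.atTop
      (fun n : ℕ => Jn Adm p C lam π x n / n) :=
    Filter.isBoundedUnder_of_eventually_le (a := b) <|
      (Filter.eventually_gt_atTop 0).mono fun n hn =>
        (div_le_iff₀ (Nat.cast_pos.2 hn)).2 (Jn_le hp hlam (fun s a => hb (s, a)) π x n)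
  filter_upwards [Filter.eventually_lt_of_limsup_lt hJ hbdd, Filter.eventually_gt_atTop 0]
    with n hJn hn
  rw [← exp_mul_Jn hp hlam.ne']
  gcongr
  exact ((div_lt_iff₀ (Nat.cast_pos.2 hn)).1 hJn).le

theorem exp_mul_rpow_lt_one_of_lt_xi0 (hlam : 0 < lam) {α β η : ℝ} (hα : 0 < α) (hβ : 0 < β)
    (hη : η < xi0 lam α β) : Real.exp (lam * α * η) * β ^ (1 - α) < 1 := by
  rw [Real.rpow_def_of_pos hβ, ← Real.exp_add, Real.exp_lt_one_iff]
  have := (lt_div_iff₀ (mul_pos hlam hα)).1 hη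
  linarith

theorem pathExpect_firstHit_le_geometric (hp : IsStochastic Adm p) (π : Policy S A Adm)
    (x z : S) {α β β₀ γ η : ℝ} (hα0 : 0 < α) (hα1 : α < 1) (hβ : 0 < β) (hβ₀ : 0 ≤ β₀)
    {m : ℕ} (hsurv : survProb Adm p π x z m ≤ β₀ * β ^ (m + 1))
    (hexp : pathExpect Adm p π x (m + 1) (fun v => Real.exp (lam * costSum C x (List.ofFn v)))
      ≤ Real.exp (lam * ((γ + η) * (m + 1 : ℕ)))) :
    pathExpect Adm p π x (m + 1) (fun v => if FirstExit (· ≠ z) v then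
        Real.exp (costSum (fun s a => lam * α * (C s a - γ)) x (List.ofFn v)) else 0) ≤
      β₀ ^ (1 - α) * (Real.exp (lam * α * η) * β ^ (1 - α)) ^ (m + 1) := by
  have hP := fun x a ha => (hp x a ha).1
  set n := m + 1
  set D := Real.exp (-(lam * α * (γ * n)))
  have hshift (v : Fin n → A × S) :
      (if FirstExit (· ≠ z) v then
        Real.exp (costSum (fun s a => lam * α * (C s a - γ)) x (List.ofFn v)) else 0) =
      D * (if FirstExit (· ≠ z) v then
        Real.exp (lam * costSum C x (List.ofFn v)) ^ α else 0) := by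
    split_ifs
    · rw [costSum_mul_sub_const, List.length_ofFn, ← Real.exp_mul, ← Real.exp_add]
      ring_nf
    · simp
  have hhit : cylProb Adm p π x n (FirstExit (· ≠ z)) ≤ β₀ * β ^ n :=
    (cylProb_firstExit_le hp π x _ m).trans hsurv
  calc _ = D * pathExpect Adm p π x n (fun v => if FirstExit (· ≠ z) v then
          Real.exp (lam * costSum C x (List.ofFn v)) ^ α else 0) := by
        simp only [hshift, pathExpect_mul_left]
    _ ≤ D * (cylProb Adm p π x n (FirstExit (· ≠ z)) ^ (1 - α) *
          pathExpect Adm p π x n (fun v => Real.exp (lam * costSum C x (List.ofFn v))) ^ α) := by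
        gcongr
        exact pathExpect_ite_rpow_le hP π x hα0 hα1.le _ fun v => (Real.exp_pos _).le
    _ ≤ D * ((β₀ * β ^ n) ^ (1 - α) * Real.exp (lam * ((γ + η) * n)) ^ α) := by
        have hcyl : 0 ≤ cylProb Adm p π x n (FirstExit (· ≠ z)) :=
          Finset.sum_nonneg fun v _ => by split_ifs; exacts [pathProb_nonneg hP _ _ _, le_rfl]
        have hE : 0 ≤ pathExpect Adm p π x n
            (fun v => Real.exp (lam * costSum C x (List.ofFn v))) :=
          pathExpect_nonneg hP π x fun v => (Real.exp_pos _).le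
        have hEα := Real.rpow_nonneg hE α
        gcongr
    _ = β₀ ^ (1 - α) * (Real.exp (lam * α * η) * β ^ (1 - α)) ^ n := by
        rw [Real.mul_rpow hβ₀ (pow_nonneg hβ.le n), ← Real.rpow_pow_comm hβ.le, mul_pow,
          ← Real.exp_mul, ← Real.exp_nat_mul]
        have hD : D * Real.exp (lam * ((γ + η) * n) * α) = Real.exp (n * (lam * α * η)) := by
          rw [← Real.exp_add]; ring_nf
        rw [← hD]; ring

end

theorem finite_hit_expectation_at_x
    (hp : ∀ (x : S), ∀ a ∈ Adm x, (∀ y, 0 ≤ p x a y) ∧ (∑ y, p x a y) = 1)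
    (hlam : 0 < lam) (α : ℝ) (hα : α ∈ Set.Ioo (0 : ℝ) 1)
    (z : S)
    (β β₀ : ℝ) (hβ : β ∈ Set.Ioo (0 : ℝ) 1) (hβ₀ : 0 < β₀)
    (hTail : ∀ (x : S) (π : Policy S A Adm) (n : ℕ),
      survProb Adm p π x z n ≤ β₀ * β ^ (n + 1))
    (ε : ℝ) (hε : ε ∈ Set.Ioo 0 (xi0 lam α β))
    (x : S) (π : Policy S A Adm) (hopt : EpsOptimalAt Adm p C lam π x ε) :
    EhitExp Adm p π x z
      (fun s a => lam * α * (C s a - Jopt Adm p C lam x)) < ⊤ := by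
  obtain ⟨η, hεη, hηξ⟩ := exists_between hε.2
  have hJ : Javg Adm p C lam π x < Jopt Adm p C lam x + η :=
    hopt.trans_lt (add_lt_add_right hεη _)
  have hr : Real.exp (lam * α * η) * β ^ (1 - α) < 1 :=
    exp_mul_rpow_lt_one_of_lt_xi0 hlam hα.1 hβ.1 hηξ
  have hgeom := (summable_geometric_of_lt_one
    (mul_nonneg (Real.exp_pos _).le (Real.rpow_nonneg hβ.1.le _)) hr).mul_left (β₀ ^ (1 - α))
  refine EexitExp_lt_top_of_summable (fun x a ha => (hp x a ha).1) π x _ _ <|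
    hgeom.of_norm_bounded_eventually_nat ?_
  filter_upwards [eventually_pathExpect_exp_costSum_le hp hlam hJ, Filter.eventually_gt_atTop 0]
    with n hexp hn
  obtain ⟨m, rfl⟩ := Nat.exists_eq_add_one_of_ne_zero hn.ne'
  rw [Real.norm_of_nonneg (pathExpect_nonneg (fun x a ha => (hp x a ha).1) π x
    fun v => by split_ifs <;> positivity)]
  exact pathExpect_firstHit_le_geometric hp π x z hα.1 hα.2 hβ.1 hβ₀.le (hTail x π m) hexp

end RiskSensitive
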